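/- arXiv:1408.2340 — 4 statements merged into one kernel-verified Lean document; each statement's English description precedes it below -/
import Mathlib

section
/- Let T : M_d(ℂ) → M_n(ℂ) be a quantum channel and x, y distinct unit vectors in ℂᵈ such that T(xx*) and T(yy*) are distinct vertices of Im(T). Then x and y are orthogonal. -/
open Matrix Kronecker BigOperators Filter
open scoped InnerProductSpace ComplexOrder

noncomputable section

/-- `Mat d` is the algebra of `d × d` complex matrices. -/
abbrev Mat (d : ℕ) := Matrix (Fin d) (Fin d) ℂ

/-- A density matrix: positive semi-definite with unit trace. -/
def IsDensity {m : Type*} [Fintype m] (ρ : Matrix m m ℂ) : Prop :=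
  ρ.PosSemidef ∧ ρ.trace = 1

/-- The tensor product `T₁ ⊗ T₂` of two (linear) maps on matrix algebras. -/
def tensorFun {d₁ d₂ n₁ n₂ : ℕ} (T₁ : Mat d₁ → Mat n₁) (T₂ : Mat d₂ → Mat n₂)
    (ρ : Matrix (Fin d₁ × Fin d₂) (Fin d₁ × Fin d₂) ℂ) :
    Matrix (Fin n₁ × Fin n₂) (Fin n₁ × Fin n₂) ℂ :=
  ∑ i, ∑ j, ∑ k, ∑ l, ρ (i, k) (j, l) •
    (T₁ (Matrix.single i j 1) ⊗ₖ T₂ (Matrix.single k l 1))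

/-- A quantum channel: completely positive and trace preserving. -/
def IsChannel {d n : ℕ} (T : Mat d →ₗ[ℂ] Mat n) : Prop :=
  (∀ ρ, (T ρ).trace = ρ.trace) ∧
  ∀ k : ℕ, ∀ ρ : Matrix (Fin d × Fin k) (Fin d × Fin k) ℂ,
    ρ.PosSemidef → (tensorFun (T ·) (id : Mat k → Mat k) ρ).PosSemidef

/-- The image of the set of density matrices under a channel. -/
def chImage {d n : ℕ} (T : Mat d →ₗ[ℂ] Mat n) : Set (Mat n) :=
  (T ·) '' {ρ | IsDensity ρ}

/-- A POVM: a tuple of positive semi-definite matrices summing to the identity. -/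
def IsPOVM {d k : ℕ} (M : Fin k → Mat d) : Prop :=
  (∀ i, (M i).PosSemidef) ∧ ∑ i, M i = 1

/-- The operator norm of a matrix, acting on the Euclidean (ℓ²) space. -/
def opNorm {d : ℕ} (M : Mat d) : ℝ :=
  ‖(Matrix.toEuclideanCLM (𝕜 := ℂ) (n := Fin d)) M‖

/-- A separable bipartite state: a convex combination of tensor products of densities. -/
def SeparableState {d₁ d₂ : ℕ} (ρ : Matrix (Fin d₁ × Fin d₂) (Fin d₁ × Fin d₂) ℂ) : Prop :=
  ∃ (m : ℕ) (c : Fin m → ℝ) (A : Fin m → Mat d₁) (B : Fin m → Mat d₂),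
    (∀ i, 0 ≤ c i) ∧ (∑ i, c i = 1) ∧ (∀ i, IsDensity (A i)) ∧ (∀ i, IsDensity (B i)) ∧
    ρ = ∑ i, (c i : ℂ) • (A i ⊗ₖ B i)

/-- An entanglement breaking channel: `T ⊗ id` maps states to separable states. -/
def IsEntanglementBreaking {d n : ℕ} (T : Mat d →ₗ[ℂ] Mat n) : Prop :=
  ∀ ρ : Matrix (Fin d × Fin d) (Fin d × Fin d) ℂ, IsDensity ρ →
    SeparableState (tensorFun (T ·) (id : Mat d → Mat d) ρ)

/-- A vertex of a convex set `C`: a point of `C` such that the intersection of all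
supporting hyperplanes of `C` at that point is the point itself. -/
def IsVertex {n : ℕ} (C : Set (Mat n)) (x : Mat n) : Prop :=
  x ∈ C ∧ ∀ y : Mat n,
    (∀ f : Mat n →ₗ[ℝ] ℝ, (∀ z ∈ C, f z ≤ f x) → f y = f x) → y = x

/-- An essentially classical-quantum channel: `ρ ↦ ∑ᵢ Tr(Mᵢρ)σᵢ` for a POVM whose
elements all have operator norm one and density matrices `σᵢ`. -/
def IsEssentiallyCQ {d n : ℕ} (T : Mat d →ₗ[ℂ] Mat n) : Prop :=
  ∃ (k : ℕ) (M : Fin k → Mat d) (σ : Fin k → Mat n),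
    IsPOVM M ∧ (∀ i, opNorm (M i) = 1) ∧ (∀ i, IsDensity (σ i)) ∧
    ∀ ρ, T ρ = ∑ i, (M i * ρ).trace • σ i


/-!
A maximizer `xx*` of a real functional `g` over the density matrices satisfies
`g (vv*) ≤ ‖v‖² g (xx*)` for every vector `v`. Taking `v = x + t w`, the quadratic
`t ↦ g (vv*) - ‖v‖² g (xx*)` has a maximum at `t = 0`, and its vanishing derivative says
`g (xw* + wx*) = 2 Re⟪x, w⟫ g (xx*)`. Since a vertex is determined by its supporting functionals,
this gives `T (xw* + wx*) = 2 Re⟪x, w⟫ T (xx*)` whenever `T (xx*)` is a vertex. With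
`c = ⟪x, y⟫`, the matrix `x (c̄ y)* + (c̄ y) x* = y (c x)* + (c x) y*` is mapped both to
`2 |c|² T (xx*)` and to `2 |c|² T (yy*)`, so `c ≠ 0` would force `T (xx*) = T (yy*)`.
-/

section DensityMaximizer

variable {m : Type*} [Fintype m]

lemma trace_vecMulVec_star_self (v : EuclideanSpace ℂ m) :
    (vecMulVec v (star v)).trace = ((‖v‖ ^ 2 : ℝ) : ℂ) := by
  rw [trace_vecMulVec, ← EuclideanSpace.inner_eq_star_dotProduct, inner_self_eq_norm_sq_to_K]
  push_cast
  rfl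

lemma isDensity_inv_norm_sq_smul_vecMulVec {v : EuclideanSpace ℂ m} (hv : v ≠ 0) :
    IsDensity ((‖v‖ ^ 2)⁻¹ • vecMulVec v (star v)) := by
  have hpos : 0 < ‖v‖ ^ 2 := by positivity
  refine ⟨(posSemidef_vecMulVec_self_star _).smul (inv_nonneg.mpr hpos.le), ?_⟩
  rw [trace_smul, trace_vecMulVec_star_self, Complex.real_smul, ← Complex.ofReal_mul,
    inv_mul_cancel₀ hpos.ne', Complex.ofReal_one]

lemma apply_vecMulVec_le_of_forall_isDensity {g : Matrix m m ℂ →ₗ[ℝ] ℝ} {P : Matrix m m ℂ}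
    (hg : ∀ ρ, IsDensity ρ → g ρ ≤ g P) (v : EuclideanSpace ℂ m) :
    g (vecMulVec v (star v)) ≤ ‖v‖ ^ 2 * g P := by
  rcases eq_or_ne v 0 with rfl | hv
  · simp
  have hpos : 0 < ‖v‖ ^ 2 := by positivity
  have h := hg _ (isDensity_inv_norm_sq_smul_vecMulVec hv)
  rwa [map_smul, smul_eq_mul, inv_mul_le_iff₀ hpos] at h

lemma vecMulVec_add_smul_star (x w : m → ℂ) (t : ℝ) :
    vecMulVec (x + (t : ℂ) • w) (star (x + (t : ℂ) • w)) =
      vecMulVec x (star x) + t • (vecMulVec x (star w) + vecMulVec w (star x)) +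
        t ^ 2 • vecMulVec w (star w) := by
  ext i j
  simp only [vecMulVec_apply, Matrix.add_apply, Matrix.smul_apply, Pi.add_apply, Pi.smul_apply,
    Pi.star_apply, star_add, star_smul, smul_eq_mul, Complex.real_smul, Complex.star_def,
    Complex.conj_ofReal, Complex.ofReal_pow]
  ring

lemma eq_zero_of_forall_mul_add_mul_sq_nonpos {a b : ℝ} (h : ∀ t : ℝ, a * t + b * t ^ 2 ≤ 0) :
    a = 0 := by
  have hmax : IsLocalMax (fun t => a * t + b * t ^ 2) 0 :=
    Filter.Eventually.of_forall fun t => by simpa using h t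
  have hderiv : HasDerivAt (fun t : ℝ => a * t + b * t ^ 2) a 0 := by
    have h := ((hasDerivAt_id' (0 : ℝ)).const_mul a).add ((hasDerivAt_pow 2 (0 : ℝ)).const_mul b)
    norm_num at h
    exact h
  exact hmax.hasDerivAt_eq_zero hderiv

lemma apply_vecMulVec_add_vecMulVec_eq_of_forall_isDensity {g : Matrix m m ℂ →ₗ[ℝ] ℝ}
    {x : EuclideanSpace ℂ m} (hx : ‖x‖ = 1)
    (hg : ∀ ρ, IsDensity ρ → g ρ ≤ g (vecMulVec x (star x))) (w : EuclideanSpace ℂ m) :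
    g (vecMulVec x (star w) + vecMulVec w (star x)) =
      2 * (⟪x, w⟫_ℂ).re * g (vecMulVec x (star x)) := by
  have hquad : ∀ t : ℝ,
      (g (vecMulVec x (star w) + vecMulVec w (star x)) -
          2 * (⟪x, w⟫_ℂ).re * g (vecMulVec x (star x))) * t +
        (g (vecMulVec w (star w)) - ‖w‖ ^ 2 * g (vecMulVec x (star x))) * t ^ 2 ≤ 0 := by
    intro t
    have h := apply_vecMulVec_le_of_forall_isDensity hg (x + (t : ℂ) • w)
    rw [WithLp.ofLp_add, WithLp.ofLp_smul, vecMulVec_add_smul_star, norm_add_sq (𝕜 := ℂ),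
      inner_smul_right, norm_smul, RCLike.re_to_complex, Complex.re_ofReal_mul,
      Complex.norm_real, Real.norm_eq_abs, mul_pow, sq_abs, hx, map_add, map_add, map_smul,
      map_smul, smul_eq_mul, smul_eq_mul] at h
    linarith
  linarith [eq_zero_of_forall_mul_add_mul_sq_nonpos hquad]

end DensityMaximizer

lemma map_vecMulVec_add_vecMulVec_eq_of_isVertex {d n : ℕ} {T : Mat d →ₗ[ℂ] Mat n}
    {x : EuclideanSpace ℂ (Fin d)} (hx : ‖x‖ = 1)
    (hv : IsVertex (chImage T) (T (vecMulVec x (star x)))) (w : EuclideanSpace ℂ (Fin d)) :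
    T (vecMulVec x (star w) + vecMulVec w (star x)) =
      (2 * (⟪x, w⟫_ℂ).re) • T (vecMulVec x (star x)) := by
  set P := T (vecMulVec x (star x))
  set S := T (vecMulVec x (star w) + vecMulVec w (star x))
  have hvertex : P + S - (2 * (⟪x, w⟫_ℂ).re) • P = P := by
    refine hv.2 _ fun f hf => ?_
    have hfT := apply_vecMulVec_add_vecMulVec_eq_of_forall_isDensity
      (g := f.comp (T.restrictScalars ℝ)) hx (fun ρ hρ => hf _ ⟨ρ, hρ, rfl⟩) w
    simp only [LinearMap.comp_apply, LinearMap.coe_restrictScalars] at hfT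
    rw [map_sub, map_add, map_smul, smul_eq_mul, hfT]
    ring
  rwa [add_sub_assoc, add_eq_left, sub_eq_zero] at hvertex

theorem stmt4_general {d n : ℕ} (T : Mat d →ₗ[ℂ] Mat n)
    (x y : EuclideanSpace ℂ (Fin d)) (hx : ‖x‖ = 1) (hy : ‖y‖ = 1)
    (hvx : IsVertex (chImage T) (T (vecMulVec x (star x))))
    (hvy : IsVertex (chImage T) (T (vecMulVec y (star y))))
    (hne : T (vecMulVec x (star x)) ≠ T (vecMulVec y (star y))) :
    ⟪x, y⟫_ℂ = 0 := by
  by_contra hc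
  set c := ⟪x, y⟫_ℂ
  have hsymm : vecMulVec x (star (starRingEnd ℂ c • y)) + vecMulVec (starRingEnd ℂ c • y) (star x)
      = vecMulVec y (star (c • x)) + vecMulVec (c • x) (star y) := by
    ext i j
    simp only [vecMulVec_apply, Matrix.add_apply, WithLp.ofLp_smul, Pi.smul_apply, Pi.star_apply,
      star_smul, smul_eq_mul, Complex.conj_conj, RCLike.star_def]
    ring
  have hTx := map_vecMulVec_add_vecMulVec_eq_of_isVertex hx hvx (starRingEnd ℂ c • y)
  have hTy := map_vecMulVec_add_vecMulVec_eq_of_isVertex hy hvy (c • x)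
  rw [inner_smul_right, Complex.conj_mul', ← Complex.ofReal_pow, Complex.ofReal_re] at hTx
  rw [inner_smul_right, ← inner_conj_symm, Complex.mul_conj', ← Complex.ofReal_pow,
    Complex.ofReal_re] at hTy
  have hc2 : 2 * ‖c‖ ^ 2 ≠ 0 := by positivity
  exact hne (smul_right_injective _ hc2 (hTx.symm.trans (hsymm ▸ hTy)))

/-- if `T(xx*)` and `T(yy*)` are distinct vertices of the image, then `x ⟂ y`. -/
theorem stmt4 {d n : ℕ} (T : Mat d →ₗ[ℂ] Mat n) (hT : IsChannel T)
    (x y : EuclideanSpace ℂ (Fin d)) (hx : ‖x‖ = 1) (hy : ‖y‖ = 1)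
    (hvx : IsVertex (chImage T) (T (vecMulVec x (star x))))
    (hvy : IsVertex (chImage T) (T (vecMulVec y (star y))))
    (hne : T (vecMulVec x (star x)) ≠ T (vecMulVec y (star y))) :
    ⟪x, y⟫_ℂ = 0 :=
  stmt4_general T x y hx hy hvx hvy hne
end
end

section
/- If T : M_d(ℂ) → M_n(ℂ) is a quantum channel whose image is a convex polytope with k vertices, then the affine dimension of Im(T) is at most k−1, and k ≤ d, hence dim(Im(T)) ≤ d−1. -/
open Matrix Kronecker BigOperators Filter
open scoped InnerProductSpace ComplexOrder

noncomputable section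

/-!
`k` points span an affine subspace of dimension at most `k - 1`, so only `k ≤ d` needs an
argument. Every vertex `σᵢ` is the image of a pure state `ψᵢψᵢ*`, because the image of the state
space is the convex hull of the images of the pure states. Pure preimages `ψ`, `φ` of distinct
vertices are orthogonal: the curve `t ↦ T((ψ + tφ)(ψ + tφ)*) / ‖ψ + tφ‖²` runs inside the polytope
through the vertex `T(ψψ*)`, and the normal cone at a vertex is full-dimensional, so the velocity
of the curve there vanishes, i.e. `T(ψφ* + φψ*) = 2 Re⟨φ, ψ⟩ T(ψψ*)`. Exchanging the roles of `ψ`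
and `φ` (after a phase rotation) makes this cross term a multiple of two distinct vertices, which
forces `⟨φ, ψ⟩ = 0`. Hence the `ψᵢ` are orthonormal and `k ≤ d`.
-/

open Set Filter Topology

section ConvexPolytope

variable {V : Type*} [AddCommGroup V] [Module ℝ V] {s : Set V} {x : V}

theorem exists_linearMap_lt_of_notMem_convexHull [FiniteDimensional ℝ V] (hs : s.Finite)
    (hx : x ∉ convexHull ℝ s) : ∃ f : V →ₗ[ℝ] ℝ, ∀ y ∈ s, f y < f x := by
  let e := (Module.finBasis ℝ V).equivFun
  have hex : e x ∉ convexHull ℝ (e '' s) := by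
    rwa [← LinearEquiv.coe_coe, ← LinearMap.image_convexHull, LinearEquiv.coe_coe,
      e.injective.mem_set_image]
  obtain ⟨g, u, hg, hu⟩ := geometric_hahn_banach_closed_point (convex_convexHull ℝ _)
    ((hs.image e).isCompact_convexHull ℝ).isClosed hex
  exact ⟨g.toLinearMap ∘ₗ e.toLinearMap,
    fun y hy => (hg _ (subset_convexHull ℝ _ ⟨y, hy, rfl⟩)).trans hu⟩

theorem exists_linearMap_lt_of_mem_extremePoints_convexHull [FiniteDimensional ℝ V]
    (hs : s.Finite) (hx : x ∈ (convexHull ℝ s).extremePoints ℝ) :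
    ∃ f : V →ₗ[ℝ] ℝ, ∀ y ∈ s \ {x}, f y < f x := by
  refine exists_linearMap_lt_of_notMem_convexHull hs.sdiff fun hmem => ?_
  have := (convex_convexHull ℝ s).mem_extremePoints_iff_mem_sdiff_convexHull_sdiff.1 hx
  exact this.2 (convexHull_mono (sdiff_subset_sdiff_left (subset_convexHull ℝ s)) hmem)

theorem LinearMap.le_of_mem_convexHull (f : V →ₗ[ℝ] ℝ) {c : ℝ} (hf : ∀ y ∈ s, f y ≤ c)
    {z : V} (hz : z ∈ convexHull ℝ s) : f z ≤ c :=
  convexHull_min hf (convex_halfSpace_le f.isLinear c) hz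

/-- The normal cone of a polytope at a vertex is full-dimensional. -/
theorem eq_of_forall_apply_eq_of_mem_extremePoints_convexHull [FiniteDimensional ℝ V]
    (hs : s.Finite) (hx : x ∈ (convexHull ℝ s).extremePoints ℝ) {y : V}
    (hy : ∀ f : V →ₗ[ℝ] ℝ, (∀ z ∈ convexHull ℝ s, f z ≤ f x) → f y = f x) : y = x := by
  obtain ⟨f₀, hf₀⟩ := exists_linearMap_lt_of_mem_extremePoints_convexHull hs hx
  have hsupp : ∀ f : V →ₗ[ℝ] ℝ, (∀ z ∈ s \ {x}, f z ≤ f x) → f (y - x) = 0 := by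
    intro f hf
    rw [map_sub, sub_eq_zero]
    refine hy f fun z => f.le_of_mem_convexHull fun w hw => ?_
    by_cases hwx : w = x
    · exact hwx ▸ le_rfl
    · exact hf w ⟨hw, hwx⟩
  rw [← sub_eq_zero, ← Module.forall_dual_apply_eq_zero_iff ℝ]
  intro g
  -- small perturbations of `f₀` still attain their maximum over the polytope at `x`
  have hnear : ∀ᶠ ε in 𝓝 (0 : ℝ), ∀ z ∈ s \ {x}, f₀ z + ε * g z < f₀ x + ε * g x :=
    hs.sdiff.eventually_all.2 fun z hz =>
      ContinuousAt.eventually_lt (by fun_prop) (by fun_prop) (by simpa using hf₀ z hz)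
  obtain ⟨ε, hε, hε0⟩ := ((hnear.filter_mono nhdsWithin_le_nhds).and
    (self_mem_nhdsWithin : ∀ᶠ ε in 𝓝[≠] (0 : ℝ), ε ≠ 0)).exists
  have h₀ := hsupp f₀ fun z hz => (hf₀ z hz).le
  have h₁ := hsupp (f₀ + ε • g) fun z hz => by simpa using (hε z hz).le
  simp only [LinearMap.add_apply, LinearMap.smul_apply, h₀, smul_eq_mul, zero_add] at h₁
  exact (mul_eq_zero.1 h₁).resolve_left hε0

theorem finrank_vectorSpan_convexHull_range_le {k : ℕ} (σ : Fin k → V) :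
    Module.finrank ℝ (vectorSpan ℝ (convexHull ℝ (range σ))) ≤ k - 1 := by
  rw [← direction_affineSpan, affineSpan_convexHull, direction_affineSpan]
  rcases k with _ | k
  · simp [range_eq_empty]
  · simpa using finrank_vectorSpan_range_le ℝ σ (Fintype.card_fin _)

end ConvexPolytope

theorem isVertex_convexHull_of_mem_extremePoints {n : ℕ} {s : Set (Mat n)} {x : Mat n}
    (hs : s.Finite) (hx : x ∈ (convexHull ℝ s).extremePoints ℝ) : IsVertex (convexHull ℝ s) x :=
  ⟨hx.1, fun _ hy => eq_of_forall_apply_eq_of_mem_extremePoints_convexHull hs hx hy⟩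

section States

variable {m : Type*} [Fintype m]

def pureStates (m : Type*) [Fintype m] : Set (Matrix m m ℂ) :=
  {ρ | ∃ ψ : m → ℂ, ψ ⬝ᵥ star ψ = 1 ∧ vecMulVec ψ (star ψ) = ρ}

theorem isDensity_of_mem_pureStates {ρ : Matrix m m ℂ} (hρ : ρ ∈ pureStates m) : IsDensity ρ := by
  obtain ⟨ψ, hψ, rfl⟩ := hρ
  exact ⟨posSemidef_vecMulVec_self_star ψ, by rw [trace_vecMulVec, hψ]⟩

theorem convex_setOf_isDensity : Convex ℝ {ρ : Matrix m m ℂ | IsDensity ρ} := by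
  rintro ρ ⟨hρ, htr⟩ σ ⟨hσ, hσtr⟩ a b ha hb hab
  refine ⟨(hρ.smul ha).add (hσ.smul hb), ?_⟩
  rw [trace_add, trace_smul, trace_smul, htr, hσtr, ← add_smul, hab, one_smul]

theorem ofReal_re_dotProduct_star_self (v : m → ℂ) : ((v ⬝ᵥ star v).re : ℂ) = v ⬝ᵥ star v := by
  have hv : ((0 : ℝ) : ℂ) ≤ v ⬝ᵥ star v := by simp
  exact (Complex.eq_re_of_ofReal_le hv).symm

theorem re_dotProduct_star_self_pos {v : m → ℂ} (hv : v ≠ 0) : 0 < (v ⬝ᵥ star v).re :=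
  (Complex.pos_iff.1 (dotProduct_self_star_pos_iff.2 hv)).1

theorem inv_re_smul_vecMulVec_mem_pureStates {v : m → ℂ} (hv : v ≠ 0) :
    ((v ⬝ᵥ star v).re)⁻¹ • vecMulVec v (star v) ∈ pureStates m := by
  set r := (v ⬝ᵥ star v).re
  have hr : 0 < r := re_dotProduct_star_self_pos hv
  have hsq : (√r)⁻¹ * (√r)⁻¹ = r⁻¹ := by rw [← mul_inv, Real.mul_self_sqrt hr.le]
  refine ⟨(√r)⁻¹ • v, ?_, ?_⟩
  · rw [star_smul, star_trivial, smul_dotProduct, dotProduct_smul, smul_smul, hsq,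
      ← ofReal_re_dotProduct_star_self, Complex.real_smul, ← Complex.ofReal_mul,
      inv_mul_cancel₀ hr.ne', Complex.ofReal_one]
  · rw [star_smul, star_trivial, smul_vecMulVec, vecMulVec_smul, smul_smul, hsq]

theorem setOf_isDensity_subset_convexHull_pureStates :
    {ρ : Matrix m m ℂ | IsDensity ρ} ⊆ convexHull ℝ (pureStates m) := by
  classical
  rintro _ ⟨hρ, htr⟩
  obtain ⟨M, v, rfl⟩ := posSemidef_iff_eq_sum_vecMulVec.1 hρ
  set w : Fin M → ℝ := fun i => (v i ⬝ᵥ star (v i)).re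
  have hw0 : ∀ i, w i = 0 ↔ v i = 0 := fun i =>
    ⟨fun hi => by_contra fun hvi => (re_dotProduct_star_self_pos hvi).ne' hi,
      fun hvi => by simp [w, hvi]⟩
  have hw1 : ∑ i, w i = 1 := by
    rw [trace_sum] at htr
    simp_rw [trace_vecMulVec] at htr
    simpa [w, Complex.re_sum] using congrArg Complex.re htr
  have hmem := Finset.centerMass_mem_convexHull {i | w i ≠ 0}
    (z := fun i => (w i)⁻¹ • vecMulVec (v i) (star (v i)))
    (fun i _ => (Complex.nonneg_iff.1 (dotProduct_self_star_nonneg (v i))).1)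
    (by rw [Finset.sum_filter_ne_zero, hw1]; exact one_pos)
    (fun i hi => inv_re_smul_vecMulVec_mem_pureStates (mt (hw0 i).2 (Finset.mem_filter.1 hi).2))
  rw [Finset.centerMass_filter_ne_zero, Finset.centerMass_eq_of_sum_1 _ _ hw1] at hmem
  convert hmem using 2 with i
  by_cases hi : w i = 0
  · simp [hi, (hw0 i).1 hi]
  · rw [smul_inv_smul₀ hi]

end States

theorem vecMulVec_add_smul_self_star {m : Type*} (ψ φ : m → ℂ) (t : ℝ) :
    vecMulVec (ψ + t • φ) (star (ψ + t • φ)) = vecMulVec ψ (star ψ) +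
      t • (vecMulVec ψ (star φ) + vecMulVec φ (star ψ)) + t ^ 2 • vecMulVec φ (star φ) := by
  simp only [star_add, star_smul, star_trivial, vecMulVec_add, add_vecMulVec, smul_vecMulVec,
    vecMulVec_smul, smul_add, smul_smul]
  module

theorem card_le_of_dotProduct_star_eq_ite {ι m : Type*} [Fintype ι] [Fintype m] [DecidableEq ι]
    (ψ : ι → m → ℂ) (h : ∀ i j, ψ i ⬝ᵥ star (ψ j) = if i = j then 1 else 0) :
    Fintype.card ι ≤ Fintype.card m := by
  have horth : Orthonormal ℂ fun i => WithLp.toLp 2 (ψ i) := by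
    rw [orthonormal_iff_ite]
    intro i j
    simp [EuclideanSpace.inner_toLp_toLp, h, eq_comm]
  simpa using horth.linearIndependent.fintype_card_le_finrank

theorem eq_zero_of_forall_mul_le_sq_mul {a b : ℝ} (h : ∀ t : ℝ, t * a ≤ t ^ 2 * b) : a = 0 := by
  have hmin : IsLocalMin (fun t : ℝ => t ^ 2 * b - t * a) 0 :=
    Eventually.of_forall fun t => by simpa using h t
  have hderiv : HasDerivAt (fun t : ℝ => t ^ 2 * b - t * a) (-a) 0 := by
    simpa using
      ((hasDerivAt_pow 2 (0 : ℝ)).mul_const b).fun_sub ((hasDerivAt_id' (0 : ℝ)).mul_const a)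
  exact neg_eq_zero.1 (hmin.hasDerivAt_eq_zero hderiv)

section ChannelImage

variable {d n : ℕ} (T : Mat d →ₗ[ℂ] Mat n)

theorem convex_chImage : Convex ℝ (chImage T) :=
  convex_setOf_isDensity.linear_image (T.restrictScalars ℝ)

theorem exists_apply_vecMulVec_eq_of_mem_extremePoints {x : Mat n}
    (hx : x ∈ (chImage T).extremePoints ℝ) :
    ∃ ψ : Fin d → ℂ, ψ ⬝ᵥ star ψ = 1 ∧ T (vecMulVec ψ (star ψ)) = x := by
  set P := T.restrictScalars ℝ '' pureStates (Fin d)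
  have hle : chImage T ⊆ convexHull ℝ P := by
    rw [← LinearMap.image_convexHull]
    exact image_mono setOf_isDensity_subset_convexHull_pureStates
  have hge : convexHull ℝ P ⊆ chImage T :=
    convexHull_min (image_mono fun _ => isDensity_of_mem_pureStates) (convex_chImage T)
  obtain ⟨_, ⟨ψ, hψ, rfl⟩, hψx⟩ := extremePoints_convexHull_subset
    (inter_extremePoints_subset_extremePoints_of_subset hge ⟨hle hx.1, hx⟩)
  exact ⟨ψ, hψ, hψx⟩

theorem apply_vecMulVec_le_of_forall_le {h : Mat n →ₗ[ℝ] ℝ} {x : Mat n}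
    (hx : ∀ z ∈ chImage T, h z ≤ h x) (ζ : Fin d → ℂ) :
    h (T (vecMulVec ζ (star ζ))) ≤ (ζ ⬝ᵥ star ζ).re * h x := by
  rcases eq_or_ne ζ 0 with rfl | hζ
  · simp
  have hle : h (T (((ζ ⬝ᵥ star ζ).re)⁻¹ • vecMulVec ζ (star ζ))) ≤ h x :=
    hx _ ⟨_, isDensity_of_mem_pureStates (inv_re_smul_vecMulVec_mem_pureStates hζ), rfl⟩
  rwa [LinearMap.map_smul_of_tower, map_smul, smul_eq_mul,
    inv_mul_le_iff₀ (re_dotProduct_star_self_pos hζ)] at hle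

/-- Along the curve `t ↦ ψ + t φ` of unnormalized pure states through a preimage of the vertex
`x`, the first-order term of the image must vanish modulo `x`. -/
theorem apply_vecMulVec_add_vecMulVec_eq_smul {x : Mat n} (hx : IsVertex (chImage T) x)
    {ψ : Fin d → ℂ} (hψ : ψ ⬝ᵥ star ψ = 1) (hTψ : T (vecMulVec ψ (star ψ)) = x)
    (φ : Fin d → ℂ) :
    T (vecMulVec ψ (star φ) + vecMulVec φ (star ψ)) = (2 * (ψ ⬝ᵥ star φ).re) • x := by
  set B := vecMulVec ψ (star φ) + vecMulVec φ (star ψ) with hB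
  have htrB : (B.trace).re = 2 * (ψ ⬝ᵥ star φ).re := by
    rw [trace_add, trace_vecMulVec, trace_vecMulVec, dotProduct_star φ ψ, Complex.add_re,
      Complex.star_def, Complex.conj_re, two_mul]
  have hsupp : ∀ h : Mat n →ₗ[ℝ] ℝ, (∀ z ∈ chImage T, h z ≤ h x) →
      h (T B) = 2 * (ψ ⬝ᵥ star φ).re * h x := by
    intro h hmax
    refine sub_eq_zero.1 (eq_zero_of_forall_mul_le_sq_mul
      (b := (φ ⬝ᵥ star φ).re * h x - h (T (vecMulVec φ (star φ)))) fun t => ?_)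
    have hle := apply_vecMulVec_le_of_forall_le T hmax (ψ + t • φ)
    rw [← trace_vecMulVec, vecMulVec_add_smul_self_star, ← hB] at hle
    simp only [map_add, LinearMap.map_smul_of_tower, map_smul, hTψ, trace_add, trace_smul,
      Complex.add_re, Complex.smul_re, smul_eq_mul, htrB, trace_vecMulVec, hψ,
      Complex.one_re] at hle
    linear_combination hle
  have hxB := hx.2 (x + (T B - (2 * (ψ ⬝ᵥ star φ).re) • x)) fun f hf => by
    rw [map_add, map_sub, map_smul, hsupp f hf, smul_eq_mul, sub_self, add_zero]
  exact sub_eq_zero.1 (add_eq_left.1 hxB)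

theorem dotProduct_star_eq_zero_of_isVertex {x y : Mat n} (hx : IsVertex (chImage T) x)
    (hy : IsVertex (chImage T) y) (hxy : x ≠ y) {ψ φ : Fin d → ℂ} (hψ : ψ ⬝ᵥ star ψ = 1)
    (hφ : φ ⬝ᵥ star φ = 1) (hTψ : T (vecMulVec ψ (star ψ)) = x)
    (hTφ : T (vecMulVec φ (star φ)) = y) : ψ ⬝ᵥ star φ = 0 := by
  set c := ψ ⬝ᵥ star φ
  -- the cross term of `ψ` and `c φ` is also that of `φ` and `c̄ ψ`, so its image is a multiple
  -- of both `x` and `y`, with the same coefficient `2 |c|²`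
  have hcross : vecMulVec ψ (star (c • φ)) + vecMulVec (c • φ) (star ψ) =
      vecMulVec φ (star (star c • ψ)) + vecMulVec (star c • ψ) (star φ) := by
    ext
    simp only [vecMulVec_apply, Matrix.add_apply, Pi.star_apply, Pi.smul_apply, smul_eq_mul,
      star_mul', star_star]
    ring
  have hxy' := apply_vecMulVec_add_vecMulVec_eq_smul T hx hψ hTψ (c • φ)
  rw [hcross, apply_vecMulVec_add_vecMulVec_eq_smul T hy hφ hTφ] at hxy'
  have hψc : ψ ⬝ᵥ star (c • φ) = star c * c := by rw [star_smul, dotProduct_smul, smul_eq_mul]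
  have hφc : φ ⬝ᵥ star (star c • ψ) = c * star c := by
    rw [star_smul, star_star, dotProduct_smul, smul_eq_mul, dotProduct_star φ ψ]
  rw [hψc, hφc, mul_comm (star c)] at hxy'
  by_contra hc
  refine hxy (smul_right_injective (Mat n) ?_ hxy').symm
  rw [Complex.star_def, Complex.mul_conj, Complex.ofReal_re]
  have := Complex.normSq_pos.2 hc
  positivity

end ChannelImage

theorem stmt8_general {d n k : ℕ} (T : Mat d →ₗ[ℂ] Mat n)
    (σ : Fin k → Mat n) (hinj : Function.Injective σ)
    (hhull : chImage T = convexHull ℝ (Set.range σ))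
    (hext : Set.extremePoints ℝ (chImage T) = Set.range σ) :
    Module.finrank ℝ (vectorSpan ℝ (chImage T)) ≤ k - 1 ∧ k ≤ d ∧
      Module.finrank ℝ (vectorSpan ℝ (chImage T)) ≤ d - 1 := by
  have hdim : Module.finrank ℝ (vectorSpan ℝ (chImage T)) ≤ k - 1 :=
    hhull ▸ finrank_vectorSpan_convexHull_range_le σ
  have hextσ : ∀ i, σ i ∈ (chImage T).extremePoints ℝ := fun i => hext ▸ mem_range_self i
  have hvertex : ∀ i, IsVertex (chImage T) (σ i) := fun i =>
    hhull ▸ isVertex_convexHull_of_mem_extremePoints (finite_range σ) (hhull ▸ hextσ i)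
  choose ψ hψ hTψ using fun i => exists_apply_vecMulVec_eq_of_mem_extremePoints T (hextσ i)
  have hkd : k ≤ d := by
    simpa using card_le_of_dotProduct_star_eq_ite ψ fun i j => by
      split_ifs with hij
      · exact hij ▸ hψ i
      · exact dotProduct_star_eq_zero_of_isVertex T (hvertex i) (hvertex j) (hinj.ne hij)
          (hψ i) (hψ j) (hTψ i) (hTψ j)
  exact ⟨hdim, hkd, hdim.trans (Nat.sub_le_sub_right hkd 1)⟩

/-- if the image of a channel is a convex polytope with `k` vertices, then
its affine dimension is at most `k - 1`, `k ≤ d`, and hence the dimension is at most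
`d - 1`. -/
theorem stmt8 {d n k : ℕ} (T : Mat d →ₗ[ℂ] Mat n) (hT : IsChannel T)
    (σ : Fin k → Mat n) (hinj : Function.Injective σ)
    (hhull : chImage T = convexHull ℝ (Set.range σ))
    (hext : Set.extremePoints ℝ (chImage T) = Set.range σ) :
    Module.finrank ℝ (vectorSpan ℝ (chImage T)) ≤ k - 1 ∧ k ≤ d ∧
      Module.finrank ℝ (vectorSpan ℝ (chImage T)) ≤ d - 1 :=
  stmt8_general T σ hinj hhull hext
end
end

section
/- An entanglement breaking quantum channel T : M_d(ℂ) → M_d(ℂ) cannot act as the identity on a matrix subalgebra End(V) for any subspace V ⊆ ℂᵈ of dimension r ≥ 2. Equivalently, if T(A) = A for all A ∈ End(V) with dim V ≥ 2, then T is not entanglement breaking. -/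
open Matrix Kronecker BigOperators Filter
open scoped InnerProductSpace ComplexOrder

noncomputable section

/-!
Take linearly independent `x, y` in the range of `P` and the antisymmetric vector
`ψ = x ⊗ y - y ⊗ x`. Every block `ρ(·, b)(·, e)` of the state `ρ = |ψ⟩⟨ψ| / ‖ψ‖²` lies in
`End(V)`, so `ρ` is a fixed point of `T ⊗ id`. Separable states have nonnegative expectation of
the flip `F`, because `Tr(F (A ⊗ B)) = Tr(A B) ≥ 0` for positive `A, B`; but `F ψ = -ψ` gives
`Tr(F ρ) = -1`.
-/

namespace Matrix

variable {n : Type*} [Fintype n]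

lemma PosSemidef.trace_mul_nonneg {𝕜 : Type*} [RCLike 𝕜] {A B : Matrix n n 𝕜}
    (hA : A.PosSemidef) (hB : B.PosSemidef) : 0 ≤ (A * B).trace := by
  classical
  open scoped MatrixOrder in
  obtain ⟨C, rfl⟩ := CStarAlgebra.nonneg_iff_eq_star_mul_self.mp hB.nonneg
  rw [← Matrix.mul_assoc, trace_mul_comm, ← Matrix.mul_assoc, star_eq_conjTranspose]
  exact (hA.mul_mul_conjTranspose_same C).trace_nonneg

lemma IsHermitian.mul_vecMulVec_star_mul {R : Type*} [CommRing R] [StarRing R]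
    {P : Matrix n n R} (hP : P.IsHermitian) {x y : n → R} (hx : P *ᵥ x = x) (hy : P *ᵥ y = y) :
    P * vecMulVec x (star y) * P = vecMulVec x (star y) := by
  rw [mul_vecMulVec, vecMulVec_mul, hx, ← hP.eq, ← star_mulVec, hy]

lemma exists_linearIndependent_pair_of_two_le_rank {K : Type*} [Field K]
    {P : Matrix n n K} (hP : P * P = P) (hrank : 2 ≤ P.rank) :
    ∃ x y : n → K, LinearIndependent K ![x, y] ∧ P *ᵥ x = x ∧ P *ᵥ y = y := by
  obtain ⟨f, hf⟩ := exists_linearIndependent_of_le_finrank hrank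
  have hPf : ∀ i, P *ᵥ (f i : n → K) = f i := fun i => by
    obtain ⟨z, hz⟩ := (f i).2
    rw [← hz, mulVecLin_apply, mulVec_mulVec, hP]
  refine ⟨f 0, f 1, ?_, hPf 0, hPf 1⟩
  have h : LinearIndependent K (fun i => (f i : n → K)) :=
    hf.map' (Submodule.subtype _) (Submodule.ker_subtype _)
  convert h using 1
  ext i : 1
  fin_cases i <;> rfl

end Matrix

section Wedge

variable {m R : Type*} [CommRing R]

def wedge (x y : m → R) : m × m → R := fun p => x p.1 * y p.2 - y p.1 * x p.2

lemma wedge_swap (x y : m → R) (p : m × m) : wedge x y p.swap = -wedge x y p := by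
  simp only [wedge, Prod.fst_swap, Prod.snd_swap]
  ring

lemma wedge_column (x y : m → R) (b : m) : (fun i => wedge x y (i, b)) = y b • x - x b • y := by
  ext i
  simp only [wedge, Pi.sub_apply, Pi.smul_apply, smul_eq_mul]
  ring

lemma wedge_ne_zero [Nontrivial R] {x y : m → R} (h : LinearIndependent R ![x, y]) :
    wedge x y ≠ 0 := by
  intro h0
  refine h.ne_zero 0 (funext fun b => ?_)
  have hcol : y b • x + (-x b) • y = 0 := by
    rw [neg_smul, ← sub_eq_add_neg, ← wedge_column, h0]
    rfl
  simpa using (LinearIndependent.pair_iff.mp h _ _ hcol).2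

end Wedge

section SwapTrace

variable {m R : Type*} [Fintype m] [CommRing R]

/-- `swapTrace ρ = Tr(F ρ)`, where `F (u ⊗ v) = v ⊗ u` is the flip. -/
def swapTrace : Matrix (m × m) (m × m) R →ₗ[R] R where
  toFun ρ := ∑ p, ρ p p.swap
  map_add' _ _ := Finset.sum_add_distrib
  map_smul' _ _ := by simp [Finset.mul_sum]

lemma swapTrace_apply (ρ : Matrix (m × m) (m × m) R) : swapTrace ρ = ∑ p, ρ p p.swap := rfl

lemma swapTrace_kronecker (A B : Matrix m m R) : swapTrace (A ⊗ₖ B) = (A * B).trace := by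
  simp [swapTrace_apply, Fintype.sum_prod_type, trace, mul_apply]

lemma swapTrace_vecMulVec_of_swap [StarRing R] {ψ : m × m → R} (hψ : ∀ p, ψ p.swap = -ψ p) :
    swapTrace (vecMulVec ψ (star ψ)) = -(vecMulVec ψ (star ψ)).trace := by
  simp [swapTrace_apply, vecMulVec_apply, hψ, trace_vecMulVec, dotProduct]

end SwapTrace

lemma isDensity_inv_trace_smul {m : Type*} [Fintype m] {σ : Matrix m m ℂ} (hσ : σ.PosSemidef)
    (h : σ.trace ≠ 0) : IsDensity (σ.trace⁻¹ • σ) :=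
  ⟨hσ.smul (inv_nonneg.mpr hσ.trace_nonneg), by rw [trace_smul, smul_eq_mul, inv_mul_cancel₀ h]⟩

lemma SeparableState.swapTrace_nonneg {d : ℕ} {ρ : Matrix (Fin d × Fin d) (Fin d × Fin d) ℂ}
    (hρ : SeparableState ρ) : 0 ≤ swapTrace ρ := by
  obtain ⟨m, c, A, B, hc, -, hA, hB, rfl⟩ := hρ
  simp only [map_sum, map_smul, swapTrace_kronecker, smul_eq_mul]
  exact Finset.sum_nonneg fun i _ =>
    mul_nonneg (Complex.zero_le_real.mpr (hc i)) ((hA i).1.trace_mul_nonneg (hB i).1)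

lemma tensorFun_id_apply {d n k : ℕ} (T : Mat d →ₗ[ℂ] Mat n)
    (ρ : Matrix (Fin d × Fin k) (Fin d × Fin k) ℂ) (a c : Fin n) (b e : Fin k) :
    tensorFun (T ·) (id : Mat k → Mat k) ρ (a, b) (c, e) =
      T (Matrix.of fun i j => ρ (i, b) (j, e)) a c := by
  have hblock : (of fun i j => ρ (i, b) (j, e) : Mat d) =
      ∑ i, ∑ j, ρ (i, b) (j, e) • single i j 1 := by
    simp_rw [smul_single, smul_eq_mul, mul_one]
    exact matrix_eq_sum_single _
  simp only [tensorFun, hblock, map_sum, map_smul, Matrix.sum_apply, Matrix.smul_apply,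
    kroneckerMap_apply, id_eq, single_apply, smul_eq_mul]
  simp [ite_and, Finset.sum_ite_eq']

lemma tensorFun_id_eq_self_of_forall_block {d k : ℕ} (T : Mat d →ₗ[ℂ] Mat d)
    (ρ : Matrix (Fin d × Fin k) (Fin d × Fin k) ℂ)
    (h : ∀ b e, T (of fun i j => ρ (i, b) (j, e)) = of fun i j => ρ (i, b) (j, e)) :
    tensorFun (T ·) (id : Mat k → Mat k) ρ = ρ := by
  ext ⟨a, b⟩ ⟨c, e⟩
  rw [tensorFun_id_apply, h]
  rfl

theorem stmt10_general {d : ℕ} (T : Mat d →ₗ[ℂ] Mat d)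
    (P : Mat d) (hP : P.IsHermitian) (hP2 : P * P = P) (hrank : 2 ≤ P.rank)
    (hfix : ∀ A : Mat d, A = P * A * P → T A = A) :
    ¬ IsEntanglementBreaking T := by
  intro hEB
  obtain ⟨x, y, hxy, hPx, hPy⟩ := exists_linearIndependent_pair_of_two_le_rank hP2 hrank
  set ψ := wedge x y
  set σ := vecMulVec ψ (star ψ)
  have hσ : σ.trace ≠ 0 := by
    rw [trace_vecMulVec, dotProduct_comm, Ne, dotProduct_star_self_eq_zero]
    exact wedge_ne_zero hxy
  have hcol (b : Fin d) : P *ᵥ (fun i => ψ (i, b)) = fun i => ψ (i, b) := by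
    rw [wedge_column, mulVec_sub, mulVec_smul, mulVec_smul, hPx, hPy]
  have hfixρ : tensorFun (T ·) id (σ.trace⁻¹ • σ) = σ.trace⁻¹ • σ := by
    refine tensorFun_id_eq_self_of_forall_block _ _ fun b e => hfix _ ?_
    change _ = P * (σ.trace⁻¹ • vecMulVec (fun i => ψ (i, b)) (star fun j => ψ (j, e))) * P
    rw [Matrix.mul_smul, Matrix.smul_mul, hP.mul_vecMulVec_star_mul (hcol b) (hcol e)]
    rfl
  have hnonneg :=
    (hEB _ (isDensity_inv_trace_smul (posSemidef_vecMulVec_self_star ψ) hσ)).swapTrace_nonneg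
  rw [hfixρ, map_smul, swapTrace_vecMulVec_of_swap (wedge_swap x y), smul_neg, smul_eq_mul,
    inv_mul_cancel₀ hσ] at hnonneg
  norm_num at hnonneg

/-- an entanglement breaking channel cannot act as the identity on a matrix
subalgebra `End(V)` with `dim V ≥ 2`.  The subspace `V` is encoded by a Hermitian
idempotent `P` of rank at least `2`; operators in `End(V)` are those with `A = PAP`. -/
theorem stmt10 {d : ℕ} (T : Mat d →ₗ[ℂ] Mat d) (hT : IsChannel T)
    (P : Mat d) (hP : P.IsHermitian) (hP2 : P * P = P) (hrank : 2 ≤ P.rank)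
    (hfix : ∀ A : Mat d, A = P * A * P → T A = A) :
    ¬ IsEntanglementBreaking T :=
  stmt10_general T P hP hP2 hrank hfix
end
end

section
/- Every essentially classical-quantum channel T : M_d(ℂ) → M_n(ℂ) is universally image additive: for any quantum channel T₂ : M_{d'}(ℂ) → M_{n'}(ℂ) and any unit vector ψ ∈ ℂᵈ ⊗ ℂ^{d'}, there exists a separable density matrix ρ_sep with (T⊗T₂)(ψψ*) = (T⊗T₂)(ρ_sep). -/
open Matrix Kronecker BigOperators Filter
open scoped InnerProductSpace ComplexOrder

noncomputable section

/-!
Write `T ρ = ∑ₘ Tr(Mₘ ρ) σₘ`. Then `(T ⊗ T₂) ρ = ∑ₘ σₘ ⊗ T₂ (Tr₁((Mₘ ⊗ 1) ρ))`, so the output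
depends on `ρ` only through the positive matrices `Bₘ = Tr₁((Mₘ ⊗ 1) ρ)`. Since `Mₘ ≥ 0` has norm
one, `1` is an eigenvalue of `Mₘ` with a unit eigenvector `eₘ`, and the POVM condition forces
`Mᵣ eₘ = 0` for `r ≠ m`. Hence the separable state `∑ₘ eₘ eₘ* ⊗ Bₘ(ψψ*)` has the same `Bₘ` as
`ψψ*`.
-/

namespace Matrix

variable {m n R : Type*} [Fintype m] [CommSemiring R]

/-- `traceLeftMul A ρ` is the partial trace `Tr₁((A ⊗ 1) ρ)` over the first factor. -/
def traceLeftMul (A : Matrix m m R) (ρ : Matrix (m × n) (m × n) R) : Matrix n n R :=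
  of fun p q => ∑ i, ∑ j, A j i * ρ (i, p) (j, q)

theorem traceLeftMul_sum {ι : Type*} (s : Finset ι) (A : Matrix m m R)
    (ρ : ι → Matrix (m × n) (m × n) R) :
    traceLeftMul A (∑ r ∈ s, ρ r) = ∑ r ∈ s, traceLeftMul A (ρ r) := by
  ext p q
  simp only [traceLeftMul, of_apply, sum_apply, Finset.mul_sum]
  rw [Finset.sum_comm (s := s)]
  refine Finset.sum_congr rfl fun i _ => ?_
  rw [Finset.sum_comm (s := s)]

theorem sum_traceLeftMul {ι : Type*} (s : Finset ι) (A : ι → Matrix m m R)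
    (ρ : Matrix (m × n) (m × n) R) :
    ∑ r ∈ s, traceLeftMul (A r) ρ = traceLeftMul (∑ r ∈ s, A r) ρ := by
  ext p q
  simp only [traceLeftMul, of_apply, sum_apply, Finset.sum_mul]
  rw [Finset.sum_comm (s := s)]
  refine Finset.sum_congr rfl fun i _ => ?_
  rw [Finset.sum_comm (s := s)]

theorem trace_traceLeftMul_one [Fintype n] [DecidableEq m] (ρ : Matrix (m × n) (m × n) R) :
    trace (traceLeftMul 1 ρ) = trace ρ := by
  simp only [traceLeftMul, trace, diag, of_apply, one_apply, ite_mul, one_mul, zero_mul,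
    Finset.sum_ite_eq', Finset.mem_univ, if_true, Fintype.sum_prod_type]
  rw [Finset.sum_comm]

theorem traceLeftMul_kronecker (A X : Matrix m m R) (B : Matrix n n R) :
    traceLeftMul A (X ⊗ₖ B) = trace (A * X) • B := by
  ext p q
  simp only [traceLeftMul, of_apply, kroneckerMap_apply, smul_apply, smul_eq_mul, trace, diag,
    mul_apply, Finset.sum_mul]
  rw [Finset.sum_comm]
  exact Finset.sum_congr rfl fun j _ => Finset.sum_congr rfl fun i _ => by ring

theorem traceLeftMul_vecMulVec [StarRing R] (A : Matrix m m R) (ψ : m × n → R) :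
    traceLeftMul A (vecMulVec ψ (star ψ)) =
      ((of (Function.curry ψ))ᴴ * A * of (Function.curry ψ))ᵀ := by
  ext p q
  simp only [traceLeftMul, of_apply, vecMulVec_apply, Pi.star_apply, transpose_apply, mul_apply,
    conjTranspose_apply, Function.curry_apply, Finset.sum_mul]
  exact Finset.sum_congr rfl fun j _ => Finset.sum_congr rfl fun i _ => by ring

end Matrix

theorem tensorFun_eq_sum_kronecker_traceLeftMul {d n d' n' k : ℕ} (T : Mat d →ₗ[ℂ] Mat n)
    (M : Fin k → Mat d) (σ : Fin k → Mat n) (hT : ∀ ρ, T ρ = ∑ i, (M i * ρ).trace • σ i)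
    (T₂ : Mat d' →ₗ[ℂ] Mat n') (ρ : Matrix (Fin d × Fin d') (Fin d × Fin d') ℂ) :
    tensorFun (T ·) (T₂ ·) ρ = ∑ m, σ m ⊗ₖ T₂ (traceLeftMul (M m) ρ) := by
  have hT₂ : ∀ X : Mat d', T₂ X = ∑ p, ∑ q, X p q • T₂ (single p q 1) := fun X => by
    conv_lhs => rw [matrix_eq_sum_single X]
    simp only [map_sum, ← map_smul, smul_single, smul_eq_mul, mul_one]
  conv_rhs => enter [2, m]; rw [hT₂]
  ext ⟨a, b⟩ ⟨c, f⟩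
  simp only [tensorFun, hT, trace_mul_single, traceLeftMul, Matrix.sum_apply, Matrix.smul_apply,
    kroneckerMap_apply, of_apply, smul_eq_mul, MulOpposite.op_one, one_smul, Finset.sum_mul,
    Finset.mul_sum]
  simp_rw [Finset.sum_comm (γ := Fin d') (α := Fin k), Finset.sum_comm (γ := Fin d) (α := Fin k),
    Finset.sum_comm (γ := Fin d) (α := Fin d')]
  refine Finset.sum_congr rfl fun _ _ => Finset.sum_congr rfl fun _ _ => Finset.sum_congr rfl
    fun _ _ => Finset.sum_congr rfl fun _ _ => Finset.sum_congr rfl fun _ _ => by ring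

theorem isDensity_vecMulVec_self_star {m : Type*} [Fintype m] {e : m → ℂ}
    (he : star e ⬝ᵥ e = 1) : IsDensity (vecMulVec e (star e)) :=
  ⟨posSemidef_vecMulVec_self_star e, by rw [trace_vecMulVec, dotProduct_comm, he]⟩

theorem Matrix.PosSemidef.exists_isDensity_smul_eq {m : Type*} [Fintype m] {B D : Matrix m m ℂ}
    (hB : B.PosSemidef) (hD : IsDensity D) : ∃ B', IsDensity B' ∧ B = B.trace • B' := by
  by_cases h : B.trace = 0
  · exact ⟨D, hD, by rw [h, zero_smul]; exact hB.trace_eq_zero_iff.mp h⟩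
  · refine ⟨B.trace⁻¹ • B, ⟨hB.smul (inv_nonneg.mpr hB.trace_nonneg), ?_⟩, ?_⟩
    · rw [trace_smul, smul_eq_mul, inv_mul_cancel₀ h]
    · rw [smul_smul, mul_inv_cancel₀ h, one_smul]

theorem separableState_sum_kronecker {k d₁ d₂ : ℕ} {A : Fin k → Mat d₁} {B : Fin k → Mat d₂}
    (hA : ∀ m, IsDensity (A m)) (hB : ∀ m, (B m).PosSemidef) (htr : ∑ m, (B m).trace = 1) :
    SeparableState (∑ m, A m ⊗ₖ B m) := by
  obtain ⟨p⟩ : Nonempty (Fin d₂) := by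
    by_contra h
    rw [not_nonempty_iff] at h
    simp [trace] at htr
  have hD : IsDensity (vecMulVec (Pi.single p 1) (star (Pi.single p 1))) :=
    isDensity_vecMulVec_self_star (by simp)
  choose B' hB' hBB' using fun m => (hB m).exists_isDensity_smul_eq hD
  have hre : ∀ m, (((B m).trace.re : ℝ) : ℂ) = (B m).trace := fun m =>
    (Complex.eq_re_of_ofReal_le (Complex.ofReal_zero ▸ (hB m).trace_nonneg)).symm
  refine ⟨k, fun m => (B m).trace.re, A, B', fun m => ?_, ?_, hA, hB', ?_⟩
  · exact (Complex.nonneg_iff.mp (hB m).trace_nonneg).1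
  · simpa using congrArg Complex.re htr
  · refine Finset.sum_congr rfl fun m _ => ?_
    conv_lhs => rw [hBB' m]
    rw [kronecker_smul, hre]

theorem isDensity_sum_kronecker {k d₁ d₂ : ℕ} {A : Fin k → Mat d₁} {B : Fin k → Mat d₂}
    (hA : ∀ m, IsDensity (A m)) (hB : ∀ m, (B m).PosSemidef) (htr : ∑ m, (B m).trace = 1) :
    IsDensity (∑ m, A m ⊗ₖ B m) := by
  refine ⟨posSemidef_sum _ fun m _ => (hA m).1.kronecker (hB m), ?_⟩
  simp only [trace_sum, trace_kronecker, (hA _).2, one_mul, htr]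

open scoped Matrix.Norms.L2Operator MatrixOrder in
theorem Matrix.PosSemidef.exists_unit_mulVec_eq_self_of_opNorm_eq_one {d : ℕ} {M : Mat d}
    (hM : M.PosSemidef) (hnorm : opNorm M = 1) :
    ∃ e : Fin d → ℂ, star e ⬝ᵥ e = 1 ∧ M *ᵥ e = e := by
  have : Nontrivial (Mat d) := nontrivial_of_ne M 0 fun h => by simp [opNorm, h] at hnorm
  have hspec : (1 : ℝ) ∈ spectrum ℝ M :=
    hnorm ▸ CStarAlgebra.norm_mem_spectrum_of_nonneg hM.nonneg
  obtain ⟨i, hi⟩ := hM.1.spectrum_real_eq_range_eigenvalues ▸ hspec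
  refine ⟨hM.1.eigenvectorBasis i, ?_, ?_⟩
  · rw [dotProduct_comm, ← EuclideanSpace.inner_eq_star_dotProduct,
      hM.1.eigenvectorBasis.inner_eq_one]
  · rw [hM.1.mulVec_eigenvectorBasis, hi, one_smul]

theorem IsPOVM.mulVec_eq_zero_of_mulVec_eq_self {d k : ℕ} {M : Fin k → Mat d} (hM : IsPOVM M)
    {r m : Fin k} {e : Fin d → ℂ} (he : M r *ᵥ e = e) (hmr : m ≠ r) : M m *ᵥ e = 0 := by
  have hrest : ∑ i ∈ Finset.univ.erase r, star e ⬝ᵥ (M i *ᵥ e) = 0 := by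
    rw [← dotProduct_sum, ← Matrix.sum_mulVec, Finset.sum_erase_eq_sub (Finset.mem_univ r), hM.2,
      sub_mulVec, he, one_mulVec, sub_self, dotProduct_zero]
  have hm := (Finset.sum_eq_zero_iff_of_nonneg fun i _ => (hM.1 i).dotProduct_mulVec_nonneg e).mp
    hrest m (Finset.mem_erase.mpr ⟨hmr, Finset.mem_univ m⟩)
  exact ((hM.1 m).dotProduct_mulVec_zero_iff e).mp hm

theorem IsPOVM.trace_mul_vecMulVec_eq_ite {d k : ℕ} {M : Fin k → Mat d} (hM : IsPOVM M)
    {e : Fin k → Fin d → ℂ} (he1 : ∀ r, star (e r) ⬝ᵥ e r = 1) (hMe : ∀ r, M r *ᵥ e r = e r)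
    (m r : Fin k) : (M m * vecMulVec (e r) (star (e r))).trace = if m = r then 1 else 0 := by
  rw [mul_vecMulVec, trace_vecMulVec]
  split_ifs with hmr
  · rw [hmr, hMe, dotProduct_comm, he1]
  · rw [hM.mulVec_eq_zero_of_mulVec_eq_self (hMe r) hmr, zero_dotProduct]

theorem stmt17_general {d n : ℕ} (T : Mat d →ₗ[ℂ] Mat n)
    (hcq : IsEssentiallyCQ T) :
    ∀ (d' n' : ℕ) (T₂ : Mat d' →ₗ[ℂ] Mat n'), IsChannel T₂ →
      ∀ ψ : Fin d × Fin d' → ℂ, star ψ ⬝ᵥ ψ = 1 →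
        ∃ ρ : Matrix (Fin d × Fin d') (Fin d × Fin d') ℂ,
          IsDensity ρ ∧ SeparableState ρ ∧
          tensorFun (T ·) (T₂ ·) (vecMulVec ψ (star ψ)) = tensorFun (T ·) (T₂ ·) ρ := by
  intro d' n' T₂ _ ψ hψ
  obtain ⟨k, M, σ, hM, hMnorm, -, hT⟩ := hcq
  choose e he1 hMe using fun m => (hM.1 m).exists_unit_mulVec_eq_self_of_opNorm_eq_one (hMnorm m)
  set B := fun m => traceLeftMul (M m) (vecMulVec ψ (star ψ))
  have hB : ∀ m, (B m).PosSemidef := fun m => by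
    simp only [B, traceLeftMul_vecMulVec]
    exact ((hM.1 m).conjTranspose_mul_mul_same _).transpose
  have htr : ∑ m, (B m).trace = 1 := by
    rw [← trace_sum, sum_traceLeftMul, hM.2, trace_traceLeftMul_one, trace_vecMulVec,
      dotProduct_comm, hψ]
  have hA := fun m => isDensity_vecMulVec_self_star (he1 m)
  refine ⟨∑ m, vecMulVec (e m) (star (e m)) ⊗ₖ B m, isDensity_sum_kronecker hA hB htr,
    separableState_sum_kronecker hA hB htr, ?_⟩
  simp only [B, tensorFun_eq_sum_kronecker_traceLeftMul T M σ hT, traceLeftMul_sum,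
    traceLeftMul_kronecker, hM.trace_mul_vecMulVec_eq_ite he1 hMe, ite_smul, one_smul, zero_smul,
    Finset.sum_ite_eq, Finset.mem_univ, if_true]

/-- every essentially classical-quantum channel is universally image
additive: for any channel `T₂` and unit vector `ψ`, there is a separable state with the
same image under `T ⊗ T₂` as `ψψ*`. -/
theorem stmt17 {d n : ℕ} (T : Mat d →ₗ[ℂ] Mat n) (hT : IsChannel T)
    (hcq : IsEssentiallyCQ T) :
    ∀ (d' n' : ℕ) (T₂ : Mat d' →ₗ[ℂ] Mat n'), IsChannel T₂ →
      ∀ ψ : Fin d × Fin d' → ℂ, star ψ ⬝ᵥ ψ = 1 →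
        ∃ ρ : Matrix (Fin d × Fin d') (Fin d × Fin d') ℂ,
          IsDensity ρ ∧ SeparableState ρ ∧
          tensorFun (T ·) (T₂ ·) (vecMulVec ψ (star ψ)) = tensorFun (T ·) (T₂ ·) ρ :=
  stmt17_general T hcq
end
end
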